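/- Let p : ℝ \ {0} → [0,∞) be measurable with ∫_{-∞}^{∞} y²/(1+y²) p(y) dy < ∞, ∫_x^{∞} y p(y) dy < ∞ for every x > 0, and ∫_{-∞}^{-x} |y| p(y) dy < ∞ for every x > 0. Define k(x) = ∫_x^{∞} (y−x) p(y) dy for x > 0 and k(x) = ∫_{-∞}^{x} (x−y) p(y) dy for x < 0, and assume k ∈ L¹(ℝ). Assume in addition that there is m > 0 with p(y) ≥ m / y² for all y with 0 < |y| ≤ 1. Then for every real x with |x| ≥ 1: ∫_{-∞}^{∞} k(t) cos(xt) dt ≥ (m / |x|) · ∫_{-1}^{1} (1 − cos s)/s² ds. -/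

import Mathlib

open MeasureTheory Real Set

/-!
Splitting `ℝ` at `0` and reflecting the negative half, each half of `∫ k(t) cos(xt) dt` has the
form `∫_0^∞ g(t) cos(xt) dt` with `g(t) = ∫_t^∞ (y - t) q(y) dy` and `q ≥ 0`. By Fubini this is
`∫_0^∞ q(y) (1 - cos(xy)) / x² dy`, because `∫_0^y (y - t) cos(xt) dt = (1 - cos(xy)) / x²`.
The new integrand is nonnegative, so we may keep only `y ∈ (0, 1]`, where `q(y) ≥ m / y²`; the
substitution `s = |x| y` then bounds each half below by
`(m / |x|) ∫_0^{|x|} (1 - cos s) / s² ds ≥ (m / |x|) ∫_0^1 (1 - cos s) / s² ds`.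
-/

theorem integrableOn_sub_mul_Ioi {q : ℝ → ℝ} {t : ℝ} (ht : 0 ≤ t) (hq : Measurable q)
    (hq0 : ∀ y, t < y → 0 ≤ q y) (h : IntegrableOn (fun y => y * q y) (Ioi t)) :
    IntegrableOn (fun y => (y - t) * q y) (Ioi t) := by
  refine h.mono' ((measurable_id.sub_const t).mul hq).aestronglyMeasurable ?_
  filter_upwards [ae_restrict_mem measurableSet_Ioi] with y (hy : t < y)
  rw [Real.norm_eq_abs, abs_of_nonneg (mul_nonneg (sub_nonneg.2 hy.le) (hq0 y hy))]
  exact mul_le_mul_of_nonneg_right (by linarith) (hq0 y hy)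

noncomputable def tailKernel (q φ : ℝ → ℝ) : ℝ × ℝ → ℝ :=
  {z : ℝ × ℝ | z.1 < z.2}.indicator fun z => (z.2 - z.1) * q z.2 * φ z.1

section TailKernel

variable {q g φ : ℝ → ℝ}

theorem tailKernel_eq_indicator_Ioi_mul (t y : ℝ) :
    tailKernel q φ (t, y) = (Ioi t).indicator (fun y => (y - t) * q y) y * φ t := by
  by_cases h : t < y <;> simp [tailKernel, h]

theorem tailKernel_eq_indicator_Iio (t y : ℝ) :
    tailKernel q φ (t, y) = (Iio y).indicator (fun t => q y * ((y - t) * φ t)) t := by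
  by_cases h : t < y <;> simp [tailKernel, h]; ring

theorem measurable_tailKernel (hq : Measurable q) (hφ : Measurable φ) :
    Measurable (tailKernel q φ) :=
  Measurable.indicator (by fun_prop) (measurableSet_lt measurable_fst measurable_snd)

theorem integral_norm_tailKernel (hq0 : ∀ y, 0 < y → 0 ≤ q y)
    (hg : ∀ t, 0 < t → g t = ∫ y in Ioi t, (y - t) * q y) {t : ℝ} (ht : 0 < t) :
    ∫ y, ‖tailKernel q φ (t, y)‖ = ‖g t * φ t‖ := by
  have hnn : ∀ y ∈ Ioi t, 0 ≤ (y - t) * q y := fun y (hy : t < y) =>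
    mul_nonneg (sub_nonneg.2 hy.le) (hq0 y (ht.trans hy))
  simp_rw [tailKernel_eq_indicator_Ioi_mul, norm_mul, integral_mul_const,
    norm_indicator_eq_indicator_norm, integral_indicator measurableSet_Ioi, hg t ht]
  rw [norm_of_nonneg (setIntegral_nonneg measurableSet_Ioi hnn)]
  congr 1
  exact setIntegral_congr_fun measurableSet_Ioi fun y hy => norm_of_nonneg (hnn y hy)

theorem integrable_tailKernel (hq : Measurable q) (hq0 : ∀ y, 0 < y → 0 ≤ q y)
    (hqi : ∀ t, 0 < t → IntegrableOn (fun y => (y - t) * q y) (Ioi t))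
    (hg : ∀ t, 0 < t → g t = ∫ y in Ioi t, (y - t) * q y) (hφ : Measurable φ)
    (hgφ : IntegrableOn (fun t => g t * φ t) (Ioi 0)) :
    Integrable (tailKernel q φ) ((volume.restrict (Ioi 0)).prod volume) := by
  refine (integrable_prod_iff (measurable_tailKernel hq hφ).aestronglyMeasurable).2 ⟨?_, ?_⟩
  · filter_upwards [ae_restrict_mem measurableSet_Ioi] with t ht
    simp_rw [tailKernel_eq_indicator_Ioi_mul]
    exact ((hqi t ht).integrable_indicator measurableSet_Ioi).mul_const _
  · refine hgφ.norm.congr ?_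
    filter_upwards [ae_restrict_mem measurableSet_Ioi] with t ht
    exact (integral_norm_tailKernel hq0 hg ht).symm

theorem setIntegral_Ioi_tailKernel (y : ℝ) :
    ∫ t in Ioi 0, tailKernel q φ (t, y) =
      (Ioi 0).indicator (fun y => q y * ∫ t in 0..y, (y - t) * φ t) y := by
  simp_rw [tailKernel_eq_indicator_Iio]
  rw [integral_indicator measurableSet_Iio, Measure.restrict_restrict measurableSet_Iio,
    inter_comm, Ioi_inter_Iio, integral_const_mul]
  rcases le_or_gt y 0 with hy | hy
  · simp [hy]
  · rw [indicator_of_mem (mem_Ioi.2 hy), ← integral_Ioc_eq_integral_Ioo,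
      intervalIntegral.integral_of_le hy.le]

theorem integrableOn_and_setIntegral_Ioi_mul_eq (hq : Measurable q)
    (hq0 : ∀ y, 0 < y → 0 ≤ q y)
    (hqi : ∀ t, 0 < t → IntegrableOn (fun y => (y - t) * q y) (Ioi t))
    (hg : ∀ t, 0 < t → g t = ∫ y in Ioi t, (y - t) * q y) (hφ : Measurable φ)
    (hgφ : IntegrableOn (fun t => g t * φ t) (Ioi 0)) :
    IntegrableOn (fun y => q y * ∫ t in 0..y, (y - t) * φ t) (Ioi 0) ∧
      ∫ t in Ioi 0, g t * φ t = ∫ y in Ioi 0, q y * ∫ t in 0..y, (y - t) * φ t := by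
  have hF := integrable_tailKernel hq hq0 hqi hg hφ hgφ
  have hslice : ∀ᵐ t ∂volume.restrict (Ioi 0), ∫ y, tailKernel q φ (t, y) = g t * φ t := by
    filter_upwards [ae_restrict_mem measurableSet_Ioi] with t ht
    simp_rw [tailKernel_eq_indicator_Ioi_mul, integral_mul_const,
      integral_indicator measurableSet_Ioi, hg t ht]
  have hfst : (fun y => ∫ t in Ioi 0, tailKernel q φ (t, y)) =
      (Ioi 0).indicator (fun y => q y * ∫ t in 0..y, (y - t) * φ t) :=
    funext setIntegral_Ioi_tailKernel
  constructor
  · rw [← integrable_indicator_iff measurableSet_Ioi, ← hfst]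
    exact hF.integral_prod_right
  · rw [← integral_congr_ae hslice,
      integral_integral_swap (f := fun t y => tailKernel q φ (t, y)) hF, hfst,
      integral_indicator measurableSet_Ioi]

end TailKernel

theorem integral_sub_mul_cos {x : ℝ} (hx : x ≠ 0) (y : ℝ) :
    ∫ t in 0..y, (y - t) * cos (x * t) = (1 - cos (x * y)) / x ^ 2 := by
  have hderiv : ∀ t ∈ uIcc 0 y,
      HasDerivAt (fun t => (y - t) * sin (x * t) / x - cos (x * t) / x ^ 2)
        ((y - t) * cos (x * t)) t := by
    intro t _
    have hxt : HasDerivAt (fun t => x * t) x t := by simpa using (hasDerivAt_id t).const_mul x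
    refine ((((hasDerivAt_id t).const_sub y).mul hxt.sin).div_const x).sub
      (hxt.cos.div_const (x ^ 2)) |>.congr_deriv ?_
    simp only [id]
    field_simp
    ring
  rw [intervalIntegral.integral_eq_sub_of_hasDerivAt hderiv
    (Continuous.intervalIntegrable (by fun_prop) _ _)]
  simp
  ring

theorem integrableOn_and_setIntegral_Ioi_mul_cos_eq {q g : ℝ → ℝ} (hq : Measurable q)
    (hq0 : ∀ y, 0 < y → 0 ≤ q y)
    (hqi : ∀ t, 0 < t → IntegrableOn (fun y => (y - t) * q y) (Ioi t))
    (hg : ∀ t, 0 < t → g t = ∫ y in Ioi t, (y - t) * q y) (hgi : IntegrableOn g (Ioi 0))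
    {x : ℝ} (hx : x ≠ 0) :
    IntegrableOn (fun y => q y * ((1 - cos (x * y)) / x ^ 2)) (Ioi 0) ∧
      ∫ t in Ioi 0, g t * cos (x * t) = ∫ y in Ioi 0, q y * ((1 - cos (x * y)) / x ^ 2) := by
  have hgφ : IntegrableOn (fun t => g t * cos (x * t)) (Ioi 0) :=
    hgi.mul_bdd (by fun_prop : Measurable fun t => cos (x * t)).aestronglyMeasurable
      (ae_of_all _ fun t => abs_cos_le_one _)
  simpa only [integral_sub_mul_cos hx] using
    integrableOn_and_setIntegral_Ioi_mul_eq hq hq0 hqi hg (by fun_prop) hgφ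

theorem one_sub_cos_div_sq_nonneg (s : ℝ) : 0 ≤ (1 - cos s) / s ^ 2 :=
  div_nonneg (sub_nonneg.2 (cos_le_one s)) (sq_nonneg s)

theorem one_sub_cos_div_sq_le (s : ℝ) : (1 - cos s) / s ^ 2 ≤ 1 / 2 := by
  rcases eq_or_ne s 0 with rfl | hs
  · norm_num
  · rw [div_le_iff₀ (by positivity)]
    linarith [one_sub_sq_div_two_le_cos (x := s)]

theorem intervalIntegrable_one_sub_cos_div_sq_mul (c a b : ℝ) :
    IntervalIntegrable (fun y => (1 - cos (c * y)) / (c * y) ^ 2) volume a b := by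
  refine (intervalIntegrable_const (c := (1 / 2 : ℝ))).mono_fun
    (by fun_prop : Measurable _).aestronglyMeasurable (ae_of_all _ fun y => ?_)
  dsimp only
  rw [norm_of_nonneg (one_sub_cos_div_sq_nonneg _), norm_of_nonneg one_half_pos.le]
  exact one_sub_cos_div_sq_le _

theorem Function.Even.integral_neg_self_eq_two_mul {f : ℝ → ℝ} (hf : Function.Even f) {a : ℝ}
    (hfi : IntervalIntegrable f volume 0 a) : ∫ x in -a..a, f x = 2 * ∫ x in 0..a, f x := by
  have hfi' : IntervalIntegrable f volume (-a) 0 := by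
    simpa [hf _] using ((IntervalIntegrable.iff_comp_neg (a := 0) (b := a) (f := f)).1 hfi).symm
  have hneg : ∫ x in -a..0, f x = ∫ x in 0..a, f x := by
    simpa [hf _] using (intervalIntegral.integral_comp_neg (a := 0) (b := a) f).symm
  rw [← intervalIntegral.integral_add_adjacent_intervals hfi' hfi, hneg, two_mul]

theorem inv_mul_integral_le_integral_one_sub_cos_div_sq_mul {c : ℝ} (hc : 1 ≤ c) :
    c⁻¹ * ∫ s in 0..1, (1 - cos s) / s ^ 2 ≤ ∫ y in 0..1, (1 - cos (c * y)) / (c * y) ^ 2 := by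
  rw [intervalIntegral.integral_comp_mul_left (fun s => (1 - cos s) / s ^ 2) (by positivity),
    mul_zero, mul_one, smul_eq_mul]
  gcongr
  refine intervalIntegral.integral_mono_interval le_rfl zero_le_one hc
    (ae_of_all _ one_sub_cos_div_sq_nonneg) ?_
  simpa using intervalIntegrable_one_sub_cos_div_sq_mul 1 0 c

theorem mul_integral_le_setIntegral_Ioi_mul_one_sub_cos {q : ℝ → ℝ} {m x : ℝ} (hx : x ≠ 0)
    (hq0 : ∀ y, 0 < y → 0 ≤ q y) (hlow : ∀ y, 0 < y → y ≤ 1 → m / y ^ 2 ≤ q y)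
    (hqi : IntegrableOn (fun y => q y * ((1 - cos (x * y)) / x ^ 2)) (Ioi 0)) :
    m * ∫ y in 0..1, (1 - cos (|x| * y)) / (|x| * y) ^ 2 ≤
      ∫ y in Ioi 0, q y * ((1 - cos (x * y)) / x ^ 2) := by
  have hnn : ∀ y, 0 ≤ (1 - cos (x * y)) / x ^ 2 := fun y =>
    div_nonneg (sub_nonneg.2 (cos_le_one _)) (sq_nonneg x)
  have hscale : ∀ y, 0 < y → m * ((1 - cos (|x| * y)) / (|x| * y) ^ 2) =
      m / y ^ 2 * ((1 - cos (x * y)) / x ^ 2) := by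
    intro y hy
    have hcos : cos (|x| * y) = cos (x * y) := by
      rcases abs_choice x with h | h <;> simp [h]
    rw [hcos, mul_pow, sq_abs]
    field_simp
  calc m * ∫ y in 0..1, (1 - cos (|x| * y)) / (|x| * y) ^ 2
      = ∫ y in Ioc 0 1, m * ((1 - cos (|x| * y)) / (|x| * y) ^ 2) := by
        rw [intervalIntegral.integral_of_le zero_le_one, integral_const_mul]
    _ ≤ ∫ y in Ioc 0 1, q y * ((1 - cos (x * y)) / x ^ 2) := by
        refine setIntegral_mono_on
          ((intervalIntegrable_one_sub_cos_div_sq_mul |x| 0 1).1.const_mul m)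
          (hqi.mono_set Ioc_subset_Ioi_self) measurableSet_Ioc fun y hy => ?_
        rw [hscale y hy.1]
        exact mul_le_mul_of_nonneg_right (hlow y hy.1 hy.2) (hnn y)
    _ ≤ ∫ y in Ioi 0, q y * ((1 - cos (x * y)) / x ^ 2) := by
        refine setIntegral_mono_set hqi ?_ Ioc_subset_Ioi_self.eventuallyLE
        filter_upwards [ae_restrict_mem measurableSet_Ioi] with y hy
        exact mul_nonneg (hq0 y hy) (hnn y)

theorem div_abs_mul_integral_le_setIntegral_Ioi_mul_cos {q g : ℝ → ℝ} (hq : Measurable q)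
    (hq0 : ∀ y, 0 < y → 0 ≤ q y) (hqi : ∀ t, 0 < t → IntegrableOn (fun y => y * q y) (Ioi t))
    (hg : ∀ t, 0 < t → g t = ∫ y in Ioi t, (y - t) * q y) (hgi : IntegrableOn g (Ioi 0))
    {m : ℝ} (hm : 0 ≤ m) (hlow : ∀ y, 0 < y → y ≤ 1 → m / y ^ 2 ≤ q y) {x : ℝ} (hx : 1 ≤ |x|) :
    m / |x| * ∫ s in 0..1, (1 - cos s) / s ^ 2 ≤ ∫ t in Ioi 0, g t * cos (x * t) := by
  have hx0 : x ≠ 0 := abs_pos.1 (one_pos.trans_le hx)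
  have hqi' : ∀ t, 0 < t → IntegrableOn (fun y => (y - t) * q y) (Ioi t) := fun t ht =>
    integrableOn_sub_mul_Ioi ht.le hq (fun y hy => hq0 y (ht.trans hy)) (hqi t ht)
  obtain ⟨hint, heq⟩ := integrableOn_and_setIntegral_Ioi_mul_cos_eq hq hq0 hqi' hg hgi hx0
  rw [heq, div_eq_mul_inv, mul_assoc]
  calc m * (|x|⁻¹ * ∫ s in 0..1, (1 - cos s) / s ^ 2)
      ≤ m * ∫ y in 0..1, (1 - cos (|x| * y)) / (|x| * y) ^ 2 := by
        gcongr
        exact inv_mul_integral_le_integral_one_sub_cos_div_sq_mul hx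
    _ ≤ _ := mul_integral_le_setIntegral_Ioi_mul_one_sub_cos hx0 hq0 hlow hint

theorem integral_eq_setIntegral_Ioi_comp_neg_add {E : Type*} [NormedAddCommGroup E]
    [NormedSpace ℝ E] {f : ℝ → E} (hf : Integrable f) :
    ∫ x, f x = (∫ x in Ioi 0, f (-x)) + ∫ x in Ioi 0, f x := by
  rw [← intervalIntegral.integral_Iic_add_Ioi (b := 0) hf.integrableOn hf.integrableOn,
    integral_comp_neg_Ioi 0 f, neg_zero]

theorem stmt8_general (p k : ℝ → ℝ) (hmeas : Measurable p)
    (hpos : ∀ y : ℝ, y ≠ 0 → 0 ≤ p y)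
    (hintp : ∀ x : ℝ, 0 < x → IntegrableOn (fun y => y * p y) (Set.Ioi x))
    (hintm : ∀ x : ℝ, 0 < x → IntegrableOn (fun y => |y| * p y) (Set.Iio (-x)))
    (hkp : ∀ x : ℝ, 0 < x → k x = ∫ y in Set.Ioi x, (y - x) * p y)
    (hkm : ∀ x : ℝ, x < 0 → k x = ∫ y in Set.Iio x, (x - y) * p y)
    (hk1 : Integrable k)
    (m : ℝ) (hm : 0 < m)
    (hlow : ∀ y : ℝ, y ≠ 0 → |y| ≤ 1 → m / y ^ 2 ≤ p y) :
    ∀ x : ℝ, 1 ≤ |x| →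
      (m / |x|) * ∫ s in (-1:ℝ)..1, (1 - Real.cos s) / s ^ 2
        ≤ ∫ s : ℝ, k s * Real.cos (x * s) := by
  intro x hx
  have hright := div_abs_mul_integral_le_setIntegral_Ioi_mul_cos hmeas
    (fun y hy => hpos y hy.ne') hintp hkp hk1.integrableOn hm.le
    (fun y hy hy1 => hlow y hy.ne' (by rwa [abs_of_pos hy])) hx
  have hintm' : ∀ t, 0 < t → IntegrableOn (fun y => y * p (-y)) (Ioi t) := fun t ht =>
    (hintm t ht).comp_neg_Ioi.congr_fun (fun y (hy : t < y) => by
      simp only [abs_neg, abs_of_pos (ht.trans hy)]) measurableSet_Ioi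
  have hkm' : ∀ t, 0 < t → k (-t) = ∫ y in Ioi t, (y - t) * p (-y) := fun t ht => by
    rw [hkm (-t) (neg_neg_of_pos ht), ← integral_Iic_eq_integral_Iio, ← integral_comp_neg_Ioi]
    exact setIntegral_congr_fun measurableSet_Ioi fun y _ => by ring
  have hleft := div_abs_mul_integral_le_setIntegral_Ioi_mul_cos (hmeas.comp measurable_neg)
    (fun y hy => hpos _ (neg_ne_zero.2 hy.ne')) hintm' hkm' hk1.integrableOn.comp_neg_Ioi hm.le
    (fun y hy hy1 => by
      simpa using hlow (-y) (neg_ne_zero.2 hy.ne') (by rwa [abs_neg, abs_of_pos hy])) hx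
  have hkcos : Integrable fun s => k s * cos (x * s) :=
    hk1.mul_bdd (by fun_prop : Measurable fun s => cos (x * s)).aestronglyMeasurable
      (ae_of_all _ fun s => abs_cos_le_one _)
  have heven : Function.Even fun s : ℝ => (1 - cos s) / s ^ 2 := fun s => by simp
  rw [integral_eq_setIntegral_Ioi_comp_neg_add hkcos,
    heven.integral_neg_self_eq_two_mul
      (by simpa using intervalIntegrable_one_sub_cos_div_sq_mul 1 0 1)]
  simp only [mul_neg, cos_neg]
  rw [mul_left_comm, two_mul]
  exact add_le_add hleft hright

/-- The key estimate of Proposition 7.6 of the paper: if moreover `p(y) ≥ m/y²`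
for `0 < |y| ≤ 1`, then `∫ k(t) cos(xt) dt ≥ (m/|x|) ∫_{-1}^{1} (1 − cos s)/s² ds`
for `|x| ≥ 1`. -/
theorem stmt8 (p k : ℝ → ℝ) (hmeas : Measurable p)
    (hpos : ∀ y : ℝ, y ≠ 0 → 0 ≤ p y)
    (hint : Integrable (fun y => y ^ 2 / (1 + y ^ 2) * p y))
    (hintp : ∀ x : ℝ, 0 < x → IntegrableOn (fun y => y * p y) (Set.Ioi x))
    (hintm : ∀ x : ℝ, 0 < x → IntegrableOn (fun y => |y| * p y) (Set.Iio (-x)))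
    (hkp : ∀ x : ℝ, 0 < x → k x = ∫ y in Set.Ioi x, (y - x) * p y)
    (hkm : ∀ x : ℝ, x < 0 → k x = ∫ y in Set.Iio x, (x - y) * p y)
    (hk1 : Integrable k)
    (m : ℝ) (hm : 0 < m)
    (hlow : ∀ y : ℝ, y ≠ 0 → |y| ≤ 1 → m / y ^ 2 ≤ p y) :
    ∀ x : ℝ, 1 ≤ |x| →
      (m / |x|) * ∫ s in (-1:ℝ)..1, (1 - Real.cos s) / s ^ 2
        ≤ ∫ s : ℝ, k s * Real.cos (x * s) :=
  stmt8_general p k hmeas hpos hintp hintm hkp hkm hk1 m hm hlow
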